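/- Define the edge P_E := { x in P : Tan(P_int, x) != -Tan(P_int, x) }. Assume f is three times continuously differentiable and D_x F-tilde(x, alpha) is invertible for all (x, alpha) in M. If x0 in P_E, then A(x0) intersects the boundary of the closed reduced simplex, i.e. x0 admits a KKT multiplier with some zero component. -/

import Mathlib

/-!
If every multiplier of `x₀` were interior, consider the linear map `B` through which the
multipliers enter `Ftilde (x₀, ·)` affinely. A nonzero kernel direction of `B` could be followed
from a multiplier until it leaves the open simplex, giving a boundary multiplier; so `B` is
injective and the interior multiplier `α₀` is unique. The implicit function theorem then
writes the zeros of `Ftilde` near `(x₀, α₀)` as a graph `x = g α` with `Dg(α₀)` injective, and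
compactness of the simplex forces the multipliers of points of `P_int` near `x₀` to converge
to `α₀`. Hence `P_int` is, near `x₀`, the image under `g` of a neighbourhood of `α₀`, so its
tangent cone at `x₀` is the linear subspace `range Dg(α₀)`, which is symmetric.
-/

noncomputable def grad (n : ℕ) (g : (Fin n → ℝ) → ℝ) (x : Fin n → ℝ) : Fin n → ℝ :=
  fun j => fderiv ℝ g x (Pi.single j 1)

noncomputable def Ftilde (n K : ℕ) (f : Fin (K + 1) → (Fin n → ℝ) → ℝ)
    (p : (Fin n → ℝ) × (Fin K → ℝ)) : Fin n → ℝ :=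
  (∑ i : Fin K, p.2 i •
      (grad n (f i.castSucc) p.1 - grad n (f (Fin.last K)) p.1))
    + grad n (f (Fin.last K)) p.1

def openSimplex (K : ℕ) : Set (Fin K → ℝ) := {α | (∀ i, 0 < α i) ∧ ∑ i, α i < 1}

def closedSimplex (K : ℕ) : Set (Fin K → ℝ) := {α | (∀ i, 0 ≤ α i) ∧ ∑ i, α i ≤ 1}

noncomputable def DxFtilde (n K : ℕ) (f : Fin (K + 1) → (Fin n → ℝ) → ℝ)
    (p : (Fin n → ℝ) × (Fin K → ℝ)) : (Fin n → ℝ) →L[ℝ] (Fin n → ℝ) :=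
  fderiv ℝ (fun x => Ftilde n K f (x, p.2)) p.1

def ParetoCritical (n K : ℕ) (f : Fin (K + 1) → (Fin n → ℝ) → ℝ) : Set (Fin n → ℝ) :=
  {x | ∃ α ∈ closedSimplex K, Ftilde n K f (x, α) = 0}

def ParetoCriticalInt (n K : ℕ) (f : Fin (K + 1) → (Fin n → ℝ) → ℝ) : Set (Fin n → ℝ) :=
  {x | ∃ α ∈ openSimplex K, Ftilde n K f (x, α) = 0}

def Tan {E : Type*} [NormedAddCommGroup E] [NormedSpace ℝ E] (Y : Set E) (x : E) :
    Set E :=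
  {v | v = 0 ∨ ∃ u : ℕ → E, (∀ i, u i ≠ 0) ∧
    Filter.Tendsto u Filter.atTop (nhds 0) ∧ (∀ i, x + u i ∈ Y) ∧
    Filter.Tendsto (fun i => ‖u i‖⁻¹ • u i) Filter.atTop (nhds (‖v‖⁻¹ • v))}

/-- The edge of the Pareto critical set. -/
def ParetoEdge (n K : ℕ) (f : Fin (K + 1) → (Fin n → ℝ) → ℝ) : Set (Fin n → ℝ) :=
  {x ∈ ParetoCritical n K f |
    Tan (ParetoCriticalInt n K f) x ≠ Neg.neg '' Tan (ParetoCriticalInt n K f) x}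


open Filter Set Topology Asymptotics

section TangentCone

variable {E F : Type*} [NormedAddCommGroup E] [NormedSpace ℝ E]
  [NormedAddCommGroup F] [NormedSpace ℝ F]

lemma mem_tan_of_eventually {S : Set F} {x v : F} (u : ℕ → F)
    (hu₀ : ∀ᶠ k in atTop, u k ≠ 0) (hu : Tendsto u atTop (𝓝 0))
    (hS : ∀ᶠ k in atTop, x + u k ∈ S)
    (hdir : Tendsto (fun k => ‖u k‖⁻¹ • u k) atTop (𝓝 (‖v‖⁻¹ • v))) :
    v ∈ Tan S x := by
  obtain ⟨N, hN⟩ := eventually_atTop.1 (hu₀.and hS)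
  have hshift : Tendsto (· + N) atTop atTop := tendsto_add_atTop_nat N
  exact Or.inr ⟨fun k => u (k + N), fun k => (hN _ (Nat.le_add_left N k)).1,
    hu.comp hshift, fun k => (hN _ (Nat.le_add_left N k)).2, hdir.comp hshift⟩

lemma range_subset_tan {S : Set F} {g : E → F} {L : E →L[ℝ] F} {a : E}
    (hg : HasFDerivAt g L a) (hS : ∀ᶠ β in 𝓝 a, g β ∈ S) :
    range L ⊆ Tan S (g a) := by
  rintro _ ⟨w, rfl⟩
  rcases eq_or_ne (L w) 0 with h | h
  · exact Or.inl h
  set u : ℕ → F := fun k => g (a + (k : ℝ)⁻¹ • w) - g a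
  have hk : Tendsto (fun k : ℕ => (k : ℝ)) atTop atTop := tendsto_natCast_atTop_atTop
  have hlim : Tendsto (fun k : ℕ => (k : ℝ) • u k) atTop (𝓝 (L w)) :=
    hg.lim w (by simpa using hk)
  have hβ : Tendsto (fun k : ℕ => a + (k : ℝ)⁻¹ • w) atTop (𝓝 a) := by
    simpa using tendsto_const_nhds.add ((tendsto_inv_atTop_zero.comp hk).smul_const w)
  have hnormalize : ContinuousAt (fun y : F => ‖y‖⁻¹ • y) (L w) :=
    (continuousAt_id.norm.inv₀ (norm_ne_zero_iff.2 h)).smul continuousAt_id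
  refine mem_tan_of_eventually u ((hlim.eventually_ne h).mono fun k hk hu => hk (by simp [hu]))
    ?_ ((hβ.eventually hS).mono fun k hk => by simpa [u] using hk) ?_
  · simpa [u] using (hg.continuousAt.tendsto.comp hβ).sub_const (g a)
  · refine (hnormalize.tendsto.comp hlim).congr' ?_
    filter_upwards [eventually_gt_atTop 0] with k hk
    have hk' : (k : ℝ) ≠ 0 := by positivity
    simp [norm_smul, smul_smul, hk']

lemma tan_subset_range [FiniteDimensional ℝ E] {S : Set F} {g : E → F} {L : E →L[ℝ] F} {a : E}
    (hg : HasFDerivAt g L a) (hL : Function.Injective L)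
    (hS : ∀ u : ℕ → F, (∀ k, g a + u k ∈ S) → Tendsto u atTop (𝓝 0) →
      ∃ β : ℕ → E, Tendsto β atTop (𝓝 a) ∧ ∀ᶠ k in atTop, g (β k) = g a + u k) :
    Tan S (g a) ⊆ range L := by
  rintro v (rfl | ⟨u, hu₀, hu, huS, hdir⟩)
  · exact ⟨0, map_zero L⟩
  obtain ⟨β, hβ, hgβ⟩ := hS u huS hu
  set w : ℕ → E := fun k => β k - a
  set r : ℕ → F := fun k => u k - L (w k)
  have hr_w : r =o[atTop] w := by
    refine (hg.isLittleO.comp_tendsto hβ).congr' ?_ (Eventually.of_forall fun k => rfl)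
    filter_upwards [hgβ] with k hk
    simp [r, w, hk]
  obtain ⟨C, -, hC⟩ := LinearMap.exists_antilipschitzWith (L : E →ₗ[ℝ] F)
    (LinearMap.ker_eq_bot.2 hL)
  have hw_Lw : w =O[atTop] fun k => L (w k) :=
    IsBigO.of_bound C (Eventually.of_forall fun k => hC.le_mul_norm (map_zero _) (w k))
  -- `w = O(L w)` by injectivity, and `L w = u - r` with `r` negligible
  have hw_u : w =O[atTop] u :=
    hw_Lw.trans ((hr_w.trans_isBigO hw_Lw).right_isBigO_add.congr_right fun k => by simp [r])
  have hr_u : Tendsto (fun k => ‖u k‖⁻¹ • r k) atTop (𝓝 0) := by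
    rw [tendsto_zero_iff_norm_tendsto_zero]
    refine ((hr_w.trans_isBigO hw_u).norm_norm.tendsto_div_nhds_zero).congr fun k => ?_
    rw [norm_smul, norm_inv, norm_norm, div_eq_inv_mul]
  have hclosed : IsClosed (range L) := by
    rw [← ContinuousLinearMap.coe_coe, ← LinearMap.coe_range]
    exact Submodule.closed_of_finiteDimensional _
  have hv : ‖v‖⁻¹ • v ∈ range L := by
    refine hclosed.mem_of_tendsto (by simpa using hdir.sub hr_u)
      (Eventually.of_forall fun k => ⟨‖u k‖⁻¹ • w k, ?_⟩)
    simp [r, smul_sub]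
  obtain ⟨z, hz⟩ := hv
  refine ⟨‖v‖ • z, ?_⟩
  rcases eq_or_ne v 0 with rfl | hv₀
  · simp
  rw [map_smul, hz, smul_smul, mul_inv_cancel₀ (norm_ne_zero_iff.2 hv₀), one_smul]

lemma tan_eq_range [FiniteDimensional ℝ E] {S : Set F} {g : E → F} {L : E →L[ℝ] F} {a : E}
    (hg : HasFDerivAt g L a) (hL : Function.Injective L) (hgS : ∀ᶠ β in 𝓝 a, g β ∈ S)
    (hS : ∀ u : ℕ → F, (∀ k, g a + u k ∈ S) → Tendsto u atTop (𝓝 0) →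
      ∃ β : ℕ → E, Tendsto β atTop (𝓝 a) ∧ ∀ᶠ k in atTop, g (β k) = g a + u k) :
    Tan S (g a) = range L :=
  (tan_subset_range hg hL hS).antisymm (range_subset_tan hg hgS)

lemma neg_image_range (L : E →L[ℝ] F) : Neg.neg '' range L = range L := by
  rw [image_neg_eq_neg, ← ContinuousLinearMap.coe_coe, ← LinearMap.coe_range, Submodule.neg_coe]

end TangentCone

section ImplicitFunction

variable {E A F : Type*} [NormedAddCommGroup E] [NormedSpace ℝ E] [CompleteSpace E]
  [NormedAddCommGroup A] [NormedSpace ℝ A] [CompleteSpace A]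
  [NormedAddCommGroup F] [NormedSpace ℝ F] [CompleteSpace F]

lemma exists_implicitFunction_injective {Φ : E × A → F} {Φ' : E × A →L[ℝ] F} {p : E × A}
    (hΦ : HasStrictFDerivAt Φ Φ' p) (hE : (Φ' ∘L .inl ℝ E A).IsInvertible)
    (hA : Function.Injective (Φ' ∘L .inr ℝ E A)) :
    ∃ (g : A → E) (L : A →L[ℝ] E), HasFDerivAt g L p.2 ∧ Function.Injective L ∧
      (∀ᶠ β in 𝓝 p.2, Φ (g β, β) = Φ p) ∧ ∀ᶠ q in 𝓝 p, Φ q = Φ p → g q.2 = q.1 := by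
  set σ := ContinuousLinearEquiv.prodComm ℝ A E
  have hΨ : HasStrictFDerivAt (Φ ∘ σ) (Φ' ∘L (σ : A × E →L[ℝ] E × A)) p.swap :=
    hΦ.comp p.swap σ.hasStrictFDerivAt
  have hinv : ((Φ' ∘L (σ : A × E →L[ℝ] E × A)) ∘L .inr ℝ A E).IsInvertible := hE
  refine ⟨hΨ.implicitFunctionOfProdDomain hinv, _,
    (hΨ.hasStrictFDerivAt_implicitFunctionOfProdDomain hinv).hasFDerivAt, ?_,
    hΨ.eventually_apply_implicitFunctionOfProdDomain hinv, ?_⟩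
  · obtain ⟨e, he⟩ := hinv
    intro β₁ β₂ h
    apply hA
    simpa [← he, ContinuousLinearMap.inverse_equiv, σ] using h
  · have := (continuous_swap.tendsto p).eventually
      (hΨ.eventually_apply_eq_iff_implicitFunctionOfProdDomain hinv)
    exact this.mono fun q hq hq' => hq.1 hq'

end ImplicitFunction

lemma tendsto_of_isCompact_of_unique {X A Y ι : Type*} [TopologicalSpace X] [TopologicalSpace A]
    [TopologicalSpace Y] [T1Space Y] {Φ : X × A → Y} (hΦ : Continuous Φ) {C : Set A}
    (hC : IsCompact C) {x₀ : X} {α₀ : A} {y₀ : Y} (huniq : ∀ α ∈ C, Φ (x₀, α) = y₀ → α = α₀)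
    {l : Filter ι} {x : ι → X} {β : ι → A} (hx : Tendsto x l (𝓝 x₀))
    (hβC : ∀ᶠ i in l, β i ∈ C) (hβ : ∀ᶠ i in l, Φ (x i, β i) = y₀) :
    Tendsto β l (𝓝 α₀) := by
  refine hC.tendsto_nhds_of_unique_mapClusterPt hβC fun γ hγC hγ => huniq γ hγC ?_
  by_contra hne
  obtain ⟨U, hU, V, hV, hUV⟩ := eventually_prod_iff.1
    (nhds_prod_eq (x := x₀) (y := γ) ▸ hΦ.continuousAt.eventually_ne hne)
  obtain ⟨i, hVi, hUi, hi⟩ :=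
    ((hγ.frequently hV).and_eventually ((hx.eventually hU).and hβ)).exists
  exact hUV hUi hVi hi

lemma exists_add_smul_mem_diff {V : Type*} [NormedAddCommGroup V] [NormedSpace ℝ V]
    {C O : Set V} (hC : IsCompact C) (hO : IsOpen O) (hOC : O ⊆ C) {α η : V}
    (hα : α ∈ C) (hη : η ≠ 0) : ∃ t : ℝ, α + t • η ∈ C \ O := by
  have hemb : Topology.IsClosedEmbedding fun t : ℝ => α + t • η :=
    (Homeomorph.addLeft α).isClosedEmbedding.comp (isClosedEmbedding_smul_left hη)
  obtain ⟨t, ht, htmax⟩ := (hemb.isCompact_preimage hC).exists_isGreatest ⟨0, by simpa using hα⟩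
  refine ⟨t, ht, fun htO => ?_⟩
  have hnhds : ∀ᶠ s in 𝓝 t, α + s • η ∈ O :=
    hemb.continuous.continuousAt.preimage_mem_nhds (hO.mem_nhds htO)
  obtain ⟨s, hsO, hts⟩ :=
    ((hnhds.filter_mono nhdsWithin_le_nhds).and (self_mem_nhdsWithin (s := Ioi t))).exists
  exact (htmax (hOC hsO)).not_gt hts

lemma IsUnit.isInvertible {E : Type*} [NormedAddCommGroup E] [NormedSpace ℝ E]
    {T : E →L[ℝ] E} (hT : IsUnit T) : T.IsInvertible :=
  ⟨ContinuousLinearEquiv.unitsEquiv ℝ E hT.unit, rfl⟩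

section Simplex

variable {K : ℕ}

lemma openSimplex_subset_closedSimplex : openSimplex K ⊆ closedSimplex K :=
  fun _ h => ⟨fun i => (h.1 i).le, h.2.le⟩

lemma isOpen_openSimplex : IsOpen (openSimplex K) := by
  simp only [openSimplex, ofPred_and, ofPred_forall]
  exact (isOpen_iInter_of_finite fun i => isOpen_lt continuous_const (continuous_apply i)).inter
    (isOpen_lt (continuous_finsetSum _ fun i _ => continuous_apply i) continuous_const)

lemma isClosed_closedSimplex : IsClosed (closedSimplex K) := by
  simp only [closedSimplex, ofPred_and, ofPred_forall]
  exact (isClosed_iInter fun i => isClosed_le continuous_const (continuous_apply i)).inter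
    (isClosed_le (continuous_finsetSum _ fun i _ => continuous_apply i) continuous_const)

lemma isCompact_closedSimplex : IsCompact (closedSimplex K) :=
  isCompact_Icc.of_isClosed_subset isClosed_closedSimplex fun _ hα =>
    ⟨hα.1, fun i => (Finset.single_le_sum (fun j _ => hα.1 j) (Finset.mem_univ i)).trans hα.2⟩

end Simplex

section Pareto

variable {n K : ℕ} {f : Fin (K + 1) → (Fin n → ℝ) → ℝ}

lemma contDiff_grad {m : WithTop ℕ∞} {g : (Fin n → ℝ) → ℝ} (hg : ContDiff ℝ (m + 1) g) :
    ContDiff ℝ m (grad n g) :=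
  contDiff_pi.2 fun _ => (hg.fderiv_right le_rfl).clm_apply contDiff_const

lemma contDiff_Ftilde {m : WithTop ℕ∞} (hf : ∀ i, ContDiff ℝ (m + 1) (f i)) :
    ContDiff ℝ m (Ftilde n K f) := by
  have hlast : ContDiff ℝ m fun p : (Fin n → ℝ) × (Fin K → ℝ) => grad n (f (Fin.last K)) p.1 :=
    (contDiff_grad (hf _)).comp contDiff_fst
  refine (ContDiff.sum fun i _ => ?_).add hlast
  exact (contDiff_pi.1 contDiff_snd i).smul (((contDiff_grad (hf _)).comp contDiff_fst).sub hlast)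

variable (n K f) in
noncomputable def multiplierMap (x : Fin n → ℝ) : (Fin K → ℝ) →L[ℝ] (Fin n → ℝ) :=
  ∑ i, (ContinuousLinearMap.proj i).smulRight
    (grad n (f i.castSucc) x - grad n (f (Fin.last K)) x)

lemma Ftilde_eq_multiplierMap_add (x : Fin n → ℝ) (α : Fin K → ℝ) :
    Ftilde n K f (x, α) = multiplierMap n K f x α + grad n (f (Fin.last K)) x := by
  simp [Ftilde, multiplierMap]

lemma hasFDerivAt_Ftilde_multiplier (x : Fin n → ℝ) (α : Fin K → ℝ) :
    HasFDerivAt (fun β => Ftilde n K f (x, β)) (multiplierMap n K f x) α := by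
  simp_rw [Ftilde_eq_multiplierMap_add]
  exact (multiplierMap n K f x).hasFDerivAt.add_const _

lemma fderiv_Ftilde_comp_inl {x : Fin n → ℝ} {α : Fin K → ℝ}
    (hF : DifferentiableAt ℝ (Ftilde n K f) (x, α)) :
    fderiv ℝ (Ftilde n K f) (x, α) ∘L .inl ℝ _ _ = DxFtilde n K f (x, α) :=
  (hF.hasFDerivAt.comp x (hasFDerivAt_prodMk_left (𝕜 := ℝ) x α)).fderiv.symm

lemma fderiv_Ftilde_comp_inr {x : Fin n → ℝ} {α : Fin K → ℝ}
    (hF : DifferentiableAt ℝ (Ftilde n K f) (x, α)) :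
    fderiv ℝ (Ftilde n K f) (x, α) ∘L .inr ℝ _ _ = multiplierMap n K f x :=
  (hF.hasFDerivAt.comp α (hasFDerivAt_prodMk_right x α)).unique
    (hasFDerivAt_Ftilde_multiplier x α)

lemma exists_boundary_multiplier_of_not_injective {x₀ : Fin n → ℝ} {α₀ : Fin K → ℝ}
    (hα₀ : α₀ ∈ closedSimplex K) (h₀ : Ftilde n K f (x₀, α₀) = 0)
    (hB : ¬ Function.Injective (multiplierMap n K f x₀)) :
    ∃ α ∈ closedSimplex K, Ftilde n K f (x₀, α) = 0 ∧ α ∉ openSimplex K := by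
  obtain ⟨η, hη, hη₀⟩ : ∃ η, multiplierMap n K f x₀ η = 0 ∧ η ≠ 0 := by
    simpa [injective_iff_map_eq_zero] using hB
  obtain ⟨t, ht, htO⟩ := exists_add_smul_mem_diff isCompact_closedSimplex isOpen_openSimplex
    openSimplex_subset_closedSimplex hα₀ hη₀
  refine ⟨α₀ + t • η, ht, ?_, htO⟩
  rwa [Ftilde_eq_multiplierMap_add, map_add, map_smul, hη, smul_zero, add_zero,
    ← Ftilde_eq_multiplierMap_add]

lemma neg_image_tan_paretoCriticalInt (hf : ∀ i, ContDiff ℝ 2 (f i)) {x₀ : Fin n → ℝ}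
    {α₀ : Fin K → ℝ} (hα₀ : α₀ ∈ openSimplex K) (h₀ : Ftilde n K f (x₀, α₀) = 0)
    (hreg : IsUnit (DxFtilde n K f (x₀, α₀)))
    (hB : Function.Injective (multiplierMap n K f x₀)) :
    Neg.neg '' Tan (ParetoCriticalInt n K f) x₀ = Tan (ParetoCriticalInt n K f) x₀ := by
  have hF : ContDiff ℝ 1 (Ftilde n K f) := contDiff_Ftilde hf
  have hΦ := hF.contDiffAt.hasStrictFDerivAt (x := (x₀, α₀)) one_ne_zero
  obtain ⟨g, L, hg, hL, hzero, hunique⟩ := exists_implicitFunction_injective hΦ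
    (by rw [fderiv_Ftilde_comp_inl hΦ.differentiableAt]; exact hreg.isInvertible)
    (by rwa [fderiv_Ftilde_comp_inr hΦ.differentiableAt])
  have hgα₀ : g α₀ = x₀ := hunique.self_of_nhds rfl
  rw [h₀] at hzero hunique
  have huniq : ∀ α ∈ closedSimplex K, Ftilde n K f (x₀, α) = 0 → α = α₀ := fun α _ hα =>
    hB <| add_right_cancel (b := grad n (f (Fin.last K)) x₀) <| by
      rw [← Ftilde_eq_multiplierMap_add, ← Ftilde_eq_multiplierMap_add, hα, h₀]
  rw [← hgα₀, tan_eq_range hg hL ?_ ?_, neg_image_range]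
  · filter_upwards [hzero, isOpen_openSimplex.mem_nhds hα₀] with β hβ hβO using ⟨β, hβO, hβ⟩
  · intro u hu hu₀
    rw [hgα₀] at hu ⊢
    choose β hβO hβ using hu
    have hx : Tendsto (fun k => x₀ + u k) atTop (𝓝 x₀) := by
      simpa using tendsto_const_nhds.add hu₀
    have hβα₀ : Tendsto β atTop (𝓝 α₀) :=
      tendsto_of_isCompact_of_unique hF.continuous isCompact_closedSimplex huniq hx
        (Eventually.of_forall fun k => openSimplex_subset_closedSimplex (hβO k))
        (Eventually.of_forall hβ)
    refine ⟨β, hβα₀, ?_⟩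
    filter_upwards [(hx.prodMk_nhds hβα₀).eventually hunique] with k hk
    exact hk (hβ k)

end Pareto

theorem edge_has_boundary_multiplier_general (n K : ℕ)
    (f : Fin (K + 1) → (Fin n → ℝ) → ℝ) (hf : ∀ i, ContDiff ℝ 3 (f i))
    (hreg : ∀ p : (Fin n → ℝ) × (Fin K → ℝ),
      p.2 ∈ openSimplex K → Ftilde n K f p = 0 → IsUnit (DxFtilde n K f p))
    (x₀ : Fin n → ℝ) (hx₀ : x₀ ∈ ParetoEdge n K f) :
    ∃ α ∈ closedSimplex K, Ftilde n K f (x₀, α) = 0 ∧ α ∉ openSimplex K := by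
  obtain ⟨⟨α₀, hα₀, h₀⟩, hasym⟩ := hx₀
  by_contra! hint
  have hα₀O : α₀ ∈ openSimplex K := hint α₀ hα₀ h₀
  by_cases hB : Function.Injective (multiplierMap n K f x₀)
  · exact hasym (neg_image_tan_paretoCriticalInt (fun i => (hf i).of_le (by norm_num))
      hα₀O h₀ (hreg _ hα₀O h₀) hB).symm
  · obtain ⟨α, hα, hα₀', hαO⟩ := exists_boundary_multiplier_of_not_injective hα₀ h₀ hB
    exact hαO (hint α hα hα₀')

/-- points on the edge of the Pareto critical set admit a KKT multiplier
on the boundary of the closed reduced simplex (i.e. with some zero component). -/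
theorem edge_has_boundary_multiplier (n K : ℕ) (hK : 0 < K)
    (f : Fin (K + 1) → (Fin n → ℝ) → ℝ) (hf : ∀ i, ContDiff ℝ 3 (f i))
    (hreg : ∀ p : (Fin n → ℝ) × (Fin K → ℝ),
      p.2 ∈ openSimplex K → Ftilde n K f p = 0 → IsUnit (DxFtilde n K f p))
    (x₀ : Fin n → ℝ) (hx₀ : x₀ ∈ ParetoEdge n K f) :
    ∃ α ∈ closedSimplex K, Ftilde n K f (x₀, α) = 0 ∧ α ∉ openSimplex K :=
  edge_has_boundary_multiplier_general n K f hf hreg x₀ hx₀
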